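/- arXiv:1205.3416 — 2 statements merged into one kernel-verified Lean document; each statement's English description precedes it below -/
import Mathlib

section
/- Let R be a finitely generated commutative graded F-algebra with R_0 = F. Then for every positive integer k, β_k(R) ≤ (k−1)·σ(R) + η(R), where η(R) := β(R_+, F[R_{≤σ(R)}]) is the top degree of R_+ modulo the submodule (F[R_{≤σ(R)}])_+·R_+. -/
open scoped ENNReal


/-- `R_+`, the span of the homogeneous elements of positive degree. -/
noncomputable def gradePos {F R : Type*} [Field F] [CommRing R] [Algebra F R]
    (𝒜 : ℕ → Submodule F R) : Submodule F R :=
  ⨆ d ∈ Set.Ioi (0 : ℕ), 𝒜 d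

/-- `β_k(R)`, the top degree of `R_+/R_+^{k+1}`:  the supremum (in `ℕ∞`) of the degrees `d`
such that the degree `d` component of `R_+` is not contained in `R_+^{k+1}`. -/
noncomputable def gBeta {F R : Type*} [Field F] [CommRing R] [Algebra F R]
    (𝒜 : ℕ → Submodule F R) (k : ℕ) : ℕ∞ :=
  sSup ((fun d : ℕ => (d : ℕ∞)) '' {d | 0 < d ∧ ¬ 𝒜 d ≤ gradePos 𝒜 ^ (k + 1)})

/-- `F[R_{≤ d}]`, the subalgebra of `R` generated by the homogeneous elements
of degree at most `d`. -/
noncomputable def gBelow {F R : Type*} [Field F] [CommRing R] [Algebra F R]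
    (𝒜 : ℕ → Submodule F R) (d : ℕ) : Subalgebra F R :=
  Algebra.adjoin F (⋃ i ∈ Set.Iic d, (𝒜 i : Set R))

/-- `σ(R)`, the minimal `d` such that `R` is a finitely generated module over `F[R_{≤ d}]`. -/
noncomputable def gSigma {F R : Type*} [Field F] [CommRing R] [Algebra F R]
    (𝒜 : ℕ → Submodule F R) : ℕ :=
  sInf {d : ℕ | Module.Finite (gBelow 𝒜 d) R}

/-- `η(R) = β(R_+, F[R_{≤ σ(R)}])`, the top degree of `R_+` modulo `(F[R_{≤ σ(R)}])_+ ⬝ R_+`. -/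
noncomputable def gEta {F R : Type*} [Field F] [CommRing R] [Algebra F R]
    (𝒜 : ℕ → Submodule F R) : ℕ∞ :=
  sSup ((fun d : ℕ => (d : ℕ∞)) '' {d | 0 < d ∧
    ¬ 𝒜 d ≤ (Subalgebra.toSubmodule (gBelow 𝒜 (gSigma 𝒜)) ⊓ gradePos 𝒜) * gradePos 𝒜})


/-!
Put `A = F[R_{≤ n}]` and `M = A_+`. A monomial in homogeneous elements of degree `≤ n` whose
degree `e` exceeds `i * n` has at least `i + 1` factors of positive degree, so `A_e ⊆ M^(i+1)`
(factors of degree `0` are absorbed, `M` being an ideal of `A`). If `R_d ⊆ M * R_+` for all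
`d > η`, split a degree-`d` element of `M * R_+` into products `m * r` of homogeneous components
with `deg m + deg r = d > i * n + η`: either `deg r ≤ η`, and then `m ∈ M^(i+1)`, or the degrees
can be shared out so that `m ∈ M^(a+1)` and, by induction, `r ∈ M^(b+1) * R_+` with `a + b = i - 1`.
Hence `R_d ⊆ M^(i+1) * R_+ ⊆ R_+^(i+2)` whenever `d > i * n + η`; take `n = σ(R)`.
-/

open DirectSum SetLike

section Homogeneous

variable {ι F R : Type*} [DecidableEq ι] [AddMonoid ι] [CommSemiring F] [Semiring R]
  [Algebra F R] (𝒜 : ι → Submodule F R) [GradedAlgebra 𝒜]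

theorem decompose_mem_iSup_of_le_grade {κ : Type*} {P : κ → Submodule F R} {g : κ → ι}
    (hP : ∀ j, P j ≤ 𝒜 (g j)) {x : R} (hx : x ∈ ⨆ j, P j) (i : ι) :
    (decompose 𝒜 x i : R) ∈ ⨆ (j) (_ : g j = i), P j := by
  have hmap : (⨆ j, P j).map (GradedAlgebra.proj 𝒜 i) ≤ ⨆ (j) (_ : g j = i), P j := by
    rw [Submodule.map_iSup]
    refine iSup_le fun j => Submodule.map_le_iff_le_comap.mpr fun y hy => ?_
    rw [Submodule.mem_comap, GradedAlgebra.proj_apply]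
    by_cases hj : g j = i
    · rw [decompose_of_mem_same 𝒜 (hj ▸ hP j hy)]
      exact Submodule.mem_iSup_of_mem j (Submodule.mem_iSup_of_mem hj hy)
    · rw [decompose_of_mem_ne 𝒜 (hP j hy) hj]
      exact zero_mem _
  exact hmap (Submodule.mem_map_of_mem hx)

theorem decompose_mem_span_inter_grade {s : Set R} (hs : s ⊆ ⋃ i, (𝒜 i : Set R)) {x : R}
    (hx : x ∈ Submodule.span F s) (i : ι) :
    (decompose 𝒜 x i : R) ∈ Submodule.span F (s ∩ 𝒜 i) := by
  have hspan : Submodule.span F s ≤ ⨆ j, Submodule.span F (s ∩ 𝒜 j) :=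
    Submodule.span_le.mpr fun y hy => by
      obtain ⟨j, hj⟩ := Set.mem_iUnion.mp (hs hy)
      exact Submodule.mem_iSup_of_mem j (Submodule.subset_span ⟨hy, hj⟩)
  simpa using decompose_mem_iSup_of_le_grade 𝒜 (g := id)
    (fun j => Submodule.span_le.mpr Set.inter_subset_right) (hspan hx) i

theorem isHomogeneous_span {s : Set R} (hs : s ⊆ ⋃ i, (𝒜 i : Set R)) :
    IsHomogeneous 𝒜 (Submodule.span F s) := fun i _ hx =>
  Submodule.span_mono Set.inter_subset_left (decompose_mem_span_inter_grade 𝒜 hs hx i)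

theorem SetLike.IsHomogeneous.le_iSup_inf_grade {N : Submodule F R} (hN : IsHomogeneous 𝒜 N) :
    N ≤ ⨆ i, N ⊓ 𝒜 i := fun x hx => by
  classical
  rw [← sum_support_decompose 𝒜 x]
  exact sum_mem fun i _ => Submodule.mem_iSup_of_mem i ⟨hN i hx, coe_mem _⟩

theorem SetLike.IsHomogeneous.mul_inf_grade_le {N₁ N₂ : Submodule F R} (h₁ : IsHomogeneous 𝒜 N₁)
    (h₂ : IsHomogeneous 𝒜 N₂) (i : ι) :
    N₁ * N₂ ⊓ 𝒜 i ≤ ⨆ (p : ι × ι) (_ : p.1 + p.2 = i), (N₁ ⊓ 𝒜 p.1) * (N₂ ⊓ 𝒜 p.2) := by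
  have hmul : N₁ * N₂ ≤ ⨆ p : ι × ι, (N₁ ⊓ 𝒜 p.1) * (N₂ ⊓ 𝒜 p.2) :=
    calc N₁ * N₂ ≤ (⨆ e, N₁ ⊓ 𝒜 e) * ⨆ f, N₂ ⊓ 𝒜 f :=
          mul_le_mul' (IsHomogeneous.le_iSup_inf_grade 𝒜 h₁) (IsHomogeneous.le_iSup_inf_grade 𝒜 h₂)
      _ = ⨆ p : ι × ι, (N₁ ⊓ 𝒜 p.1) * (N₂ ⊓ 𝒜 p.2) := by
          simp only [Submodule.iSup_mul, Submodule.mul_iSup, iSup_prod]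
          exact iSup_comm
  have hgrade (p : ι × ι) : (N₁ ⊓ 𝒜 p.1) * (N₂ ⊓ 𝒜 p.2) ≤ 𝒜 (p.1 + p.2) :=
    Submodule.mul_le.mpr fun a ha b hb => mul_mem_graded ha.2 hb.2
  rintro x ⟨hx, hxi⟩
  rw [← decompose_of_mem_same 𝒜 hxi]
  exact decompose_mem_iSup_of_le_grade 𝒜 hgrade (hmul hx) i

end Homogeneous

theorem Nat.exists_add_eq_mul_lt_of_succ_mul_lt_add {n e f : ℕ} (he : 0 < e) (hf : 0 < f) :
    ∀ i, (i + 1) * n < e + f → ∃ a b, a + b = i ∧ a * n < e ∧ b * n < f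
  | 0, _ => ⟨0, 0, rfl, by simpa, by simpa⟩
  | i + 1, h => by
    obtain ⟨a, b, hab, ha, hb⟩ :=
      exists_add_eq_mul_lt_of_succ_mul_lt_add he hf i (by nlinarith)
    by_cases ha' : (a + 1) * n < e
    · exact ⟨a + 1, b, by omega, ha', hb⟩
    · refine ⟨a, b + 1, by omega, ha, ?_⟩
      nlinarith

section PositivePart

variable {F R : Type*} [Field F] [CommRing R] [Algebra F R] (𝒜 : ℕ → Submodule F R)

theorem grade_le_gradePos {d : ℕ} (hd : 0 < d) : 𝒜 d ≤ gradePos 𝒜 :=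
  le_iSup₂ (f := fun d (_ : d ∈ Set.Ioi 0) => 𝒜 d) d hd

variable [GradedAlgebra 𝒜]

theorem mem_gradePos_iff {x : R} : x ∈ gradePos 𝒜 ↔ x ∈ HomogeneousIdeal.irrelevant 𝒜 := by
  refine ⟨fun hx => ?_, fun hx => ?_⟩
  · have : gradePos 𝒜 ≤ (HomogeneousIdeal.irrelevant 𝒜).toIdeal.restrictScalars F :=
      iSup₂_le fun d hd y hy => HomogeneousIdeal.mem_irrelevant_of_mem 𝒜 hd hy
    exact this hx
  · exact (HomogeneousIdeal.toAddSubmonoid_irrelevant_le 𝒜 (P := (gradePos 𝒜).toAddSubmonoid)).mpr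
      (fun d hd => grade_le_gradePos 𝒜 hd) hx

theorem isHomogeneous_gradePos : IsHomogeneous 𝒜 (gradePos 𝒜) := fun i x hx => by
  rw [mem_gradePos_iff] at hx ⊢
  exact (HomogeneousIdeal.irrelevant 𝒜).isHomogeneous i hx

theorem mul_gradePos_le (N : Submodule F R) : N * gradePos 𝒜 ≤ gradePos 𝒜 :=
  Submodule.mul_le.mpr fun x _ y hy => by
    rw [mem_gradePos_iff] at hy ⊢
    exact Ideal.mul_mem_left _ x hy

theorem gradePos_inf_grade_zero : gradePos 𝒜 ⊓ 𝒜 0 = ⊥ := by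
  refine eq_bot_iff.mpr ?_
  rintro x ⟨hx : x ∈ gradePos 𝒜, hx0⟩
  rw [mem_gradePos_iff, HomogeneousIdeal.mem_irrelevant_iff, GradedRing.proj_apply,
    decompose_of_mem_same 𝒜 hx0] at hx
  exact hx

end PositivePart

section Below

variable {F R : Type*} [Field F] [CommRing R] [Algebra F R] (𝒜 : ℕ → Submodule F R) (n : ℕ)

/-- `(F[R_{≤ n}])_+`. -/
noncomputable def gBelowPos : Submodule F R :=
  Subalgebra.toSubmodule (gBelow 𝒜 n) ⊓ gradePos 𝒜

theorem closure_le_gBelow :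
    Submonoid.closure (⋃ i ∈ Set.Iic n, (𝒜 i : Set R)) ≤ (gBelow 𝒜 n).toSubmonoid :=
  Submonoid.closure_le.mpr Algebra.subset_adjoin

theorem mem_gBelowPos_of_mem_grade {x : R} (hx : x ∈ gBelow 𝒜 n) {d : ℕ} (hxd : x ∈ 𝒜 d)
    (hd : 0 < d) : x ∈ gBelowPos 𝒜 n :=
  ⟨hx, grade_le_gradePos 𝒜 hd hxd⟩

theorem grade_le_of_gEta_lt {d : ℕ} (h : gEta 𝒜 < d) :
    𝒜 d ≤ gBelowPos 𝒜 (gSigma 𝒜) * gradePos 𝒜 := by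
  by_contra hd
  have hd0 : 0 < d := by exact_mod_cast pos_of_gt h
  have : (d : ℕ∞) ≤ gEta 𝒜 := le_sSup ⟨d, ⟨hd0, hd⟩, rfl⟩
  exact this.not_gt h

variable [GradedAlgebra 𝒜]

theorem closure_subset_iUnion_grade :
    (Submonoid.closure (⋃ i ∈ Set.Iic n, (𝒜 i : Set R)) : Set R) ⊆ ⋃ i, (𝒜 i : Set R) := by
  have : Submonoid.closure (⋃ i ∈ Set.Iic n, (𝒜 i : Set R)) ≤ homogeneousSubmonoid 𝒜 :=
    Submonoid.closure_le.mpr fun x hx => by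
      obtain ⟨i, -, hi⟩ := Set.mem_iUnion₂.mp hx
      exact ⟨i, hi⟩
  exact fun x hx => Set.mem_iUnion.mpr (this hx)

theorem isHomogeneous_gBelowPos : IsHomogeneous 𝒜 (gBelowPos 𝒜 n) := by
  have hA : IsHomogeneous 𝒜 (Subalgebra.toSubmodule (gBelow 𝒜 n)) := by
    rw [gBelow, Algebra.adjoin_eq_span]
    exact isHomogeneous_span 𝒜 (closure_subset_iUnion_grade 𝒜 n)
  exact fun i x hx => ⟨hA i hx.1, isHomogeneous_gradePos 𝒜 i hx.2⟩

theorem gBelow_mul_gBelowPos_pow_le (i : ℕ) :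
    Subalgebra.toSubmodule (gBelow 𝒜 n) * gBelowPos 𝒜 n ^ (i + 1) ≤ gBelowPos 𝒜 n ^ (i + 1) := by
  have hideal : Subalgebra.toSubmodule (gBelow 𝒜 n) * gBelowPos 𝒜 n ≤ gBelowPos 𝒜 n :=
    Submodule.mul_le.mpr fun a ha m hm =>
      ⟨(gBelow 𝒜 n).mul_mem ha hm.1, mul_gradePos_le 𝒜 _ (Submodule.mul_mem_mul ha hm.2)⟩
  rw [pow_succ', ← mul_assoc]
  exact mul_le_mul' hideal le_rfl

theorem exists_grade_mem_gBelowPos_pow_of_mem_closure {y : R}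
    (hy : y ∈ Submonoid.closure (⋃ i ∈ Set.Iic n, (𝒜 i : Set R))) :
    ∃ d, y ∈ 𝒜 d ∧ ∀ i, i * n < d → y ∈ gBelowPos 𝒜 n ^ (i + 1) := by
  induction hy using Submonoid.closure_induction with
  | mem z hz =>
    obtain ⟨j, hjn, hzj⟩ := Set.mem_iUnion₂.mp hz
    refine ⟨j, hzj, fun i hi => ?_⟩
    obtain rfl : i = 0 := by
      by_contra hi0
      have := Nat.le_mul_of_pos_left n (Nat.pos_of_ne_zero hi0)
      rw [Set.mem_Iic] at hjn
      omega
    simpa using mem_gBelowPos_of_mem_grade 𝒜 n (Algebra.subset_adjoin hz) hzj (by omega)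
  | one => exact ⟨0, one_mem_graded 𝒜, fun i hi => absurd hi (Nat.not_lt_zero _)⟩
  | mul x y hx hy ihx ihy =>
    obtain ⟨d₁, hxd, hxP⟩ := ihx
    obtain ⟨d₂, hyd, hyP⟩ := ihy
    have hxA := closure_le_gBelow 𝒜 n hx
    have hyA := closure_le_gBelow 𝒜 n hy
    refine ⟨d₁ + d₂, mul_mem_graded hxd hyd, fun i hi => ?_⟩
    obtain rfl | hd₁ := Nat.eq_zero_or_pos d₁
    · exact gBelow_mul_gBelowPos_pow_le 𝒜 n i
        (Submodule.mul_mem_mul hxA (hyP i (by omega)))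
    obtain rfl | hd₂ := Nat.eq_zero_or_pos d₂
    · rw [mul_comm]
      exact gBelow_mul_gBelowPos_pow_le 𝒜 n i
        (Submodule.mul_mem_mul hyA (hxP i (by omega)))
    cases i with
    | zero =>
      simpa using mem_gBelowPos_of_mem_grade 𝒜 n (mul_mem hxA hyA) (mul_mem_graded hxd hyd)
        (by omega)
    | succ i =>
      obtain ⟨a, b, rfl, ha, hb⟩ := Nat.exists_add_eq_mul_lt_of_succ_mul_lt_add hd₁ hd₂ i hi
      have := Submodule.mul_mem_mul (hxP a ha) (hyP b hb)
      rwa [← pow_add, show a + 1 + (b + 1) = a + b + 1 + 1 by ring] at this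

theorem gBelow_inf_grade_le_gBelowPos_pow {i d : ℕ} (h : i * n < d) :
    Subalgebra.toSubmodule (gBelow 𝒜 n) ⊓ 𝒜 d ≤ gBelowPos 𝒜 n ^ (i + 1) := by
  rintro x ⟨hx, hxd⟩
  rw [gBelow, Algebra.adjoin_eq_span] at hx
  have hx' := decompose_mem_span_inter_grade 𝒜 (closure_subset_iUnion_grade 𝒜 n) hx d
  rw [decompose_of_mem_same 𝒜 hxd] at hx'
  refine Submodule.span_le.mpr ?_ hx'
  rintro y ⟨hy, hyd⟩
  obtain ⟨e, hye, hyP⟩ := exists_grade_mem_gBelowPos_pow_of_mem_closure 𝒜 n hy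
  obtain rfl | hne := eq_or_ne e d
  · exact hyP i h
  · rw [SetLike.mem_coe, ← decompose_of_mem_same 𝒜 hyd, decompose_of_mem_ne 𝒜 hye hne]
    exact zero_mem _

theorem grade_le_gBelowPos_pow_mul_gradePos {η : ℕ}
    (hη : ∀ d, η < d → 𝒜 d ≤ gBelowPos 𝒜 n * gradePos 𝒜) (i : ℕ) {d : ℕ}
    (hd : i * n + η < d) : 𝒜 d ≤ gBelowPos 𝒜 n ^ (i + 1) * gradePos 𝒜 := by
  induction i using Nat.strong_induction_on generalizing d with
  | _ i ih =>
    refine le_trans (fun x hx => IsHomogeneous.mul_inf_grade_le 𝒜 (isHomogeneous_gBelowPos 𝒜 n)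
      (isHomogeneous_gradePos 𝒜) d ⟨hη d (by omega) hx, hx⟩) (iSup₂_le ?_)
    rintro ⟨e, f⟩ (hp : e + f = d)
    obtain _ | i := i
    · simpa using mul_le_mul' inf_le_left inf_le_left
    obtain rfl | he := Nat.eq_zero_or_pos e
    · have : gBelowPos 𝒜 n ⊓ 𝒜 0 = ⊥ :=
        eq_bot_iff.mpr ((inf_le_inf_right _ inf_le_right).trans (gradePos_inf_grade_zero 𝒜).le)
      simp [this]
    by_cases hf : f ≤ η
    · exact mul_le_mul' ((inf_le_inf_right _ inf_le_left).trans
        (gBelow_inf_grade_le_gBelowPos_pow 𝒜 n (by omega))) inf_le_left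
    · obtain ⟨a, b, rfl, ha, hb⟩ := Nat.exists_add_eq_mul_lt_of_succ_mul_lt_add (n := n) he
        (show 0 < f - η by omega) i (by omega)
      calc (gBelowPos 𝒜 n ⊓ 𝒜 e) * (gradePos 𝒜 ⊓ 𝒜 f)
          ≤ gBelowPos 𝒜 n ^ (a + 1) * (gBelowPos 𝒜 n ^ (b + 1) * gradePos 𝒜) :=
            mul_le_mul' ((inf_le_inf_right _ inf_le_left).trans
                (gBelow_inf_grade_le_gBelowPos_pow 𝒜 n ha))
              (inf_le_right.trans (ih b (by omega) (by omega)))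
        _ = gBelowPos 𝒜 n ^ (a + b + 1 + 1) * gradePos 𝒜 := by
            rw [← mul_assoc, ← pow_add]; ring_nf

end Below

theorem gBeta_le_gEta_general {F R : Type*} [Field F] [CommRing R] [Algebra F R]
    (𝒜 : ℕ → Submodule F R) [GradedAlgebra 𝒜] (k : ℕ) :
    gBeta 𝒜 k ≤ (((k - 1) * gSigma 𝒜 : ℕ) : ℕ∞) + gEta 𝒜 := by
  refine sSup_le ?_
  rintro _ ⟨d, ⟨hd, hd_not⟩, rfl⟩
  by_contra! hlt
  obtain ⟨η, hη⟩ := ENat.ne_top_iff_exists.mp (le_add_self.trans_lt hlt).ne_top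
  rw [← hη, ← Nat.cast_add, Nat.cast_lt] at hlt
  apply hd_not
  obtain _ | i := k
  · simpa using grade_le_gradePos 𝒜 hd
  calc 𝒜 d ≤ gBelowPos 𝒜 (gSigma 𝒜) ^ (i + 1) * gradePos 𝒜 :=
        grade_le_gBelowPos_pow_mul_gradePos 𝒜 _
          (fun e he => grade_le_of_gEta_lt 𝒜 (by rw [← hη]; exact_mod_cast he)) i
          (by simpa using hlt)
    _ ≤ gradePos 𝒜 ^ (i + 1 + 1) := by
        rw [pow_succ (gradePos 𝒜)]
        exact mul_le_mul' (pow_le_pow_left' inf_le_right _) le_rfl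

/-- For a finitely generated commutative graded `F`-algebra `R` with `R_0 = F` and any
positive integer `k`, `β_k(R) ≤ (k-1)·σ(R) + η(R)`. -/
theorem gBeta_le_gEta {F R : Type*} [Field F] [CommRing R] [Algebra F R]
    (𝒜 : ℕ → Submodule F R) [GradedAlgebra 𝒜] (h0 : 𝒜 0 = 1)
    (hfg : Algebra.FiniteType F R) (k : ℕ) (hk : 1 ≤ k) :
    gBeta 𝒜 k ≤ (((k - 1) * gSigma 𝒜 : ℕ) : ℕ∞) + gEta 𝒜 :=
  gBeta_le_gEta_general 𝒜 k
end

section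
/- Let V_1, ..., V_n be G-modules and W = V_1 ⊕ ... ⊕ V_n. Then σ(G, W) = max_{i=1,...,n} σ(G, V_i). -/
open scoped ENNReal


open MvPolynomial

/-- The (right) action of a group element `g` on the coordinate ring `F[V]` of `V = ι → F`,
determined by `(f^g)(v) = f (g • v)` where `g` acts on `V` through the representation `ρ`. -/
noncomputable def polyAct {F : Type*} [Field F] {G : Type*} [Group G] {ι : Type*}
    [Fintype ι] [DecidableEq ι] (ρ : Representation F G (ι → F)) (g : G) :
    MvPolynomial ι F →ₐ[F] MvPolynomial ι F :=
  MvPolynomial.aeval (fun i => ∑ j, (ρ g (Pi.single j 1) i) • MvPolynomial.X j)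

/-- The ring of polynomial invariants `F[V]^G`. -/
noncomputable def invRing {F : Type*} [Field F] {G : Type*} [Group G] {ι : Type*}
    [Fintype ι] [DecidableEq ι] (ρ : Representation F G (ι → F)) :
    Subalgebra F (MvPolynomial ι F) :=
  ⨅ g : G, AlgHom.equalizer (polyAct ρ g) (AlgHom.id F (MvPolynomial ι F))

/-- The degree `d` homogeneous component of a graded subalgebra `S` of the polynomial ring,
as a subspace of the polynomial ring. -/
noncomputable def subComp {F : Type*} [Field F] {ι : Type*} (S : Subalgebra F (MvPolynomial ι F)) (d : ℕ) :
    Submodule F (MvPolynomial ι F) :=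
  Subalgebra.toSubmodule S ⊓ homogeneousSubmodule ι F d

/-- `S_+`, the span of the homogeneous elements of positive degree of `S`. -/
noncomputable def subPos {F : Type*} [Field F] {ι : Type*} (S : Subalgebra F (MvPolynomial ι F)) :
    Submodule F (MvPolynomial ι F) :=
  ⨆ d ∈ Set.Ioi (0 : ℕ), subComp S d

/-- `β_k(S)`, the top degree of `S_+ / S_+^{k+1}`, i.e. the supremum (in `ℕ∞`) of the degrees `d`
such that the degree `d` component of `S_+` is not contained in `S_+^{k+1}`. -/
noncomputable def betaAlg {F : Type*} [Field F] {ι : Type*}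
    (S : Subalgebra F (MvPolynomial ι F)) (k : ℕ) : ℕ∞ :=
  sSup ((fun d : ℕ => (d : ℕ∞)) '' {d | 0 < d ∧ ¬ subComp S d ≤ subPos S ^ (k + 1)})

/-- `β_k(F[V], S)`, the top degree of `F[V]/S_+^k F[V]`, i.e. the supremum (in `ℕ∞`) of the
degrees `d` such that the degree `d` component of the polynomial ring is not contained in
`S_+^k ⬝ F[V]`. -/
noncomputable def betaMod {F : Type*} [Field F] {ι : Type*}
    (S : Subalgebra F (MvPolynomial ι F)) (k : ℕ) : ℕ∞ :=
  sSup ((fun d : ℕ => (d : ℕ∞)) ''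
    {d | ¬ homogeneousSubmodule ι F d ≤ subPos S ^ k * (⊤ : Submodule F (MvPolynomial ι F))})

/-- `β_k(G)`, the supremum over all finite dimensional `G`-modules `V` of `β_k(F[V]^G)`. -/
noncomputable def betaGrp (F : Type*) [Field F] (G : Type*) [Group G] (k : ℕ) : ℕ∞ :=
  ⨆ (n : ℕ) (ρ : Representation F G (Fin n → F)), betaAlg (invRing ρ) k

/-- `S` is a finitely generated module over its subalgebra `T`. -/
noncomputable def fgOver {F : Type*} [Field F] {ι : Type*} (S T : Subalgebra F (MvPolynomial ι F)) : Prop :=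
  ∃ B : Finset (MvPolynomial ι F), (B : Set (MvPolynomial ι F)) ⊆ S ∧
    Subalgebra.toSubmodule S ≤ Subalgebra.toSubmodule T * Submodule.span F (B : Set (MvPolynomial ι F))

/-- `σ(S)`: the minimal `d` such that `S` is a finitely generated module over the subalgebra
`F[S_{≤ d}]` generated by the homogeneous elements of `S` of degree at most `d`. -/
noncomputable def sigmaAlg {F : Type*} [Field F] {ι : Type*}
    (S : Subalgebra F (MvPolynomial ι F)) : ℕ :=
  sInf {d : ℕ | fgOver S (Algebra.adjoin F (⋃ i ∈ Set.Iic d, (subComp S i : Set (MvPolynomial ι F))))}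

/-- `σ(G)`, the supremum over all finite dimensional `G`-modules `V` of `σ(F[V]^G)`. -/
noncomputable def sigmaGrp (F : Type*) [Field F] (G : Type*) [Group G] : ℕ∞ :=
  ⨆ (n : ℕ) (ρ : Representation F G (Fin n → F)), (sigmaAlg (invRing ρ) : ℕ∞)

/-- An irreducible (simple, nonzero) representation. -/
def IsIrredRep {F : Type*} [Field F] {G : Type*} [Group G] {V : Type*}
    [AddCommGroup V] [Module F V] (π : Representation F G V) : Prop :=
  Nontrivial V ∧ ∀ W : Submodule F V, (∀ g : G, ∀ x ∈ W, π g x ∈ W) → W = ⊥ ∨ W = ⊤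

/-- The direct sum of two representations on spaces of the form `ι → F`. -/
noncomputable def repSum {F : Type*} [Field F] {G : Type*} [Group G] {α β : Type*}
    (ρ : Representation F G (α → F)) (π : Representation F G (β → F)) :
    Representation F G (α ⊕ β → F) where
  toFun g :=
    { toFun := fun v => Sum.elim (fun i => ρ g (fun i' => v (Sum.inl i')) i)
        (fun j => π g (fun j' => v (Sum.inr j')) j)
      map_add' := fun u v => by
        funext x
        cases x with
        | inl i => exact congrFun (map_add (ρ g) _ _) i
        | inr j => exact congrFun (map_add (π g) _ _) j
      map_smul' := fun c v => by
        funext x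
        cases x with
        | inl i => exact congrFun (map_smul (ρ g) c _) i
        | inr j => exact congrFun (map_smul (π g) c _) j }
  map_one' := by
    ext v x
    cases x <;> simp
  map_mul' := fun g h => by
    ext v x
    cases x <;> simp [map_mul]

/-- The direct sum of a finite family of representations on spaces of the form `κ i → F`. -/
noncomputable def repSigma {F : Type*} [Field F] {G : Type*} [Group G] {n : ℕ}
    {κ : Fin n → Type*} (ρ : ∀ i, Representation F G (κ i → F)) :
    Representation F G ((Σ i, κ i) → F) where
  toFun g :=
    { toFun := fun v x => ρ x.1 g (fun j => v ⟨x.1, j⟩) x.2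
      map_add' := fun u v => by funext x; exact congrFun (map_add (ρ x.1 g) _ _) x.2
      map_smul' := fun c v => by funext x; exact congrFun (map_smul (ρ x.1 g) c _) x.2 }
  map_one' := by
    ext v x
    simp
  map_mul' := fun g h => by
    ext v x
    simp [map_mul]

/-!
Put `d = maxᵢ σ(G, Vᵢ)`. By Noether's theorem `F[Vᵢ]` is a finite module over `F[Vᵢ]^G`, hence
over `F[F[Vᵢ]^G_{≤ d}]`. As `F[W]` is generated by the images of the `F[Vᵢ]`, which carry
`F[Vᵢ]^G_{≤ d}` into `F[W]^G_{≤ d}`, it is a finite module over `A = F[F[W]^G_{≤ d}]`; the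
Reynolds operator is `A`-linear and retracts `F[W]` onto `F[W]^G`, so `σ(G, W) ≤ d`.
Conversely, restriction of functions to `Vᵢ ⊆ W` is a degree-preserving equivariant map
`F[W] → F[Vᵢ]` sending `F[W]^G` onto `F[Vᵢ]^G` (split by the pullback along `W → Vᵢ`), so it
sends module generators over `F[F[W]^G_{≤ e}]` to module generators over `F[F[Vᵢ]^G_{≤ e}]`.
-/

theorem MvPolynomial.homogeneousComponent_linearMap {R σ τ : Type*} [CommSemiring R]
    (φ : MvPolynomial σ R →ₗ[R] MvPolynomial τ R)
    (hφ : ∀ n p, IsHomogeneous p n → IsHomogeneous (φ p) n) (e : ℕ) (f : MvPolynomial σ R) :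
    homogeneousComponent e (φ f) = φ (homogeneousComponent e f) := by
  conv_lhs => rw [← sum_homogeneousComponent f, map_sum, map_sum]
  have hcomp (i : ℕ) := homogeneousComponent_of_mem (m := e)
    ((mem_homogeneousSubmodule _ _).2 (hφ i _ (homogeneousComponent_isHomogeneous i f)))
  simp_rw [hcomp, Finset.sum_ite_eq]
  split_ifs with he
  · rfl
  · rw [homogeneousComponent_eq_zero _ _ (by simpa using he), map_zero]

section SubmoduleProducts

variable {R A : Type*} [CommSemiring R] [CommSemiring A] [Algebra R A]

theorem Subalgebra.mem_toSubmodule_mul_span_of_mem_span {S : Subalgebra R A} {C : Set A} {f : A}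
    (hf : f ∈ Submodule.span S C) : f ∈ Subalgebra.toSubmodule S * Submodule.span R C := by
  obtain ⟨k, a, c, rfl⟩ := Submodule.mem_span_set'.1 hf
  exact Submodule.sum_mem _ fun i _ =>
    Submodule.mul_mem_mul (a i).2 (Submodule.subset_span (c i).2)

theorem Subalgebra.prod_le_toSubmodule_mul_prod {ι : Type*} (s : Finset ι) (T : Subalgebra R A)
    {M E : ι → Submodule R A} (h : ∀ i ∈ s, M i ≤ Subalgebra.toSubmodule T * E i) :
    ∏ i ∈ s, M i ≤ Subalgebra.toSubmodule T * ∏ i ∈ s, E i := by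
  have hpow : ∀ k, Subalgebra.toSubmodule T ^ k ≤ Subalgebra.toSubmodule T
    | 0 => Submodule.one_le.2 T.one_mem
    | k + 1 => (T.isIdempotentElem_toSubmodule.pow_succ_eq k).le
  calc ∏ i ∈ s, M i ≤ ∏ i ∈ s, Subalgebra.toSubmodule T * E i := Finset.prod_le_prod' h
    _ = Subalgebra.toSubmodule T ^ s.card * ∏ i ∈ s, E i := by
      rw [Finset.prod_mul_distrib, Finset.prod_const]
    _ ≤ Subalgebra.toSubmodule T * ∏ i ∈ s, E i := mul_le_mul' (hpow _) le_rfl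

theorem Subalgebra.toSubmodule_finset_sup {ι : Type*} (s : Finset ι) (S : ι → Subalgebra R A) :
    Subalgebra.toSubmodule (s.sup S) = ∏ i ∈ s, Subalgebra.toSubmodule (S i) := by
  classical
  induction s using Finset.induction_on with
  | empty => exact Algebra.toSubmodule_bot
  | insert i s hi ih => rw [Finset.sup_insert, Finset.prod_insert hi, ← ih, mul_toSubmodule]

end SubmoduleProducts

section LowDegreeSubalgebra

variable {F : Type*} [Field F] {ι ι' : Type*}

/-- `F[S_{≤ d}]`, the subalgebra appearing in the definition of `sigmaAlg`. -/
noncomputable def adjoinDegLE (S : Subalgebra F (MvPolynomial ι F)) (d : ℕ) :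
    Subalgebra F (MvPolynomial ι F) :=
  Algebra.adjoin F (⋃ i ∈ Set.Iic d, (subComp S i : Set (MvPolynomial ι F)))

theorem subComp_le_adjoinDegLE {S : Subalgebra F (MvPolynomial ι F)} {e d : ℕ} (h : e ≤ d) :
    subComp S e ≤ Subalgebra.toSubmodule (adjoinDegLE S d) := fun _ hf =>
  Algebra.subset_adjoin (Set.mem_biUnion (Set.mem_Iic.2 h) hf)

theorem adjoinDegLE_le (S : Subalgebra F (MvPolynomial ι F)) (d : ℕ) : adjoinDegLE S d ≤ S :=
  Algebra.adjoin_le <| Set.iUnion₂_subset fun _ _ _ hf => hf.1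

theorem adjoinDegLE_mono (S : Subalgebra F (MvPolynomial ι F)) {d d' : ℕ} (h : d ≤ d') :
    adjoinDegLE S d ≤ adjoinDegLE S d' :=
  Algebra.adjoin_le <| Set.iUnion₂_subset fun _ he =>
    subComp_le_adjoinDegLE (le_trans (Set.mem_Iic.1 he) h)

theorem map_adjoinDegLE_le (φ : MvPolynomial ι F →ₐ[F] MvPolynomial ι' F)
    {S : Subalgebra F (MvPolynomial ι F)} {S' : Subalgebra F (MvPolynomial ι' F)}
    (hS : S.map φ ≤ S') (hφ : ∀ n p, IsHomogeneous p n → IsHomogeneous (φ p) n) (d : ℕ) :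
    (adjoinDegLE S d).map φ ≤ adjoinDegLE S' d := by
  rw [adjoinDegLE, AlgHom.map_adjoin]
  refine Algebra.adjoin_le <| Set.image_subset_iff.2 <| Set.iUnion₂_subset fun e he p hp => ?_
  exact subComp_le_adjoinDegLE (Set.mem_Iic.1 he)
    ⟨hS ⟨p, hp.1, rfl⟩, (mem_homogeneousSubmodule _ _).2 (hφ e p hp.2)⟩

theorem fgOver_of_le {S T : Subalgebra F (MvPolynomial ι F)} (h : S ≤ T) : fgOver S T := by
  classical
  refine ⟨{1}, by simp [S.one_mem], ?_⟩
  rw [Finset.coe_singleton, ← Submodule.one_eq_span, mul_one]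
  exact Subalgebra.toSubmodule.monotone h

theorem fgOver.mono {S T T' : Subalgebra F (MvPolynomial ι F)} (hT : T ≤ T') (h : fgOver S T) :
    fgOver S T' :=
  let ⟨B, hBS, hB⟩ := h
  ⟨B, hBS, hB.trans (mul_le_mul' (Subalgebra.toSubmodule.monotone hT) le_rfl)⟩

/-- `F`-algebra generators of `S` can be split into their homogeneous components, so `S` is
generated by homogeneous elements of bounded degree. -/
theorem exists_fgOver_adjoinDegLE {S : Subalgebra F (MvPolynomial ι F)} (hS : S.FG)
    (hhom : ∀ f ∈ S, ∀ e, homogeneousComponent e f ∈ S) :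
    ∃ d, fgOver S (adjoinDegLE S d) := by
  obtain ⟨t, rfl⟩ := hS
  refine ⟨t.sup totalDegree, fgOver_of_le <| Algebra.adjoin_le fun f hf => ?_⟩
  have hfS : f ∈ Algebra.adjoin F (t : Set (MvPolynomial ι F)) := Algebra.subset_adjoin hf
  rw [← sum_homogeneousComponent f]
  refine Subalgebra.sum_mem _ fun e he => subComp_le_adjoinDegLE ?_
    ⟨hhom f hfS e, homogeneousComponent_mem e f⟩
  exact (Nat.lt_succ_iff.1 (Finset.mem_range.1 he)).trans (Finset.le_sup hf)

theorem fgOver.of_map (φ : MvPolynomial ι F →ₐ[F] MvPolynomial ι' F)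
    {S : Subalgebra F (MvPolynomial ι F)} {S' : Subalgebra F (MvPolynomial ι' F)}
    (hS : S.map φ = S') (hφ : ∀ n p, IsHomogeneous p n → IsHomogeneous (φ p) n) {d : ℕ}
    (h : fgOver S (adjoinDegLE S d)) : fgOver S' (adjoinDegLE S' d) := by
  classical
  obtain ⟨B, hBS, hB⟩ := h
  subst hS
  refine ⟨B.image φ, by simpa using Set.image_mono hBS, ?_⟩
  rw [Subalgebra.map_toSubmodule, Finset.coe_image]
  refine (Submodule.map_mono hB).trans ?_
  rw [Submodule.map_mul, Submodule.map_span, ← Subalgebra.map_toSubmodule]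
  exact mul_le_mul' (Subalgebra.toSubmodule.monotone (map_adjoinDegLE_le φ le_rfl hφ d)) le_rfl

end LowDegreeSubalgebra

section Action

variable {F : Type*} [Field F] {G : Type*} [Group G] {ι : Type*} [Fintype ι] [DecidableEq ι]
  (ρ : Representation F G (ι → F))

theorem mem_invRing {f : MvPolynomial ι F} : f ∈ invRing ρ ↔ ∀ g, polyAct ρ g f = f := by
  simp [invRing, Algebra.mem_iInf, AlgHom.mem_equalizer]

theorem polyAct_X (g : G) (i : ι) :
    polyAct ρ g (X i) = ∑ j, ρ g (Pi.single j 1) i • X j := by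
  simp [polyAct]

theorem polyAct_one : polyAct ρ 1 = AlgHom.id F (MvPolynomial ι F) := by
  ext i : 1
  simp [polyAct_X, Pi.single_apply]

theorem polyAct_mul (g h : G) : polyAct ρ (g * h) = (polyAct ρ h).comp (polyAct ρ g) := by
  ext i : 1
  simp only [AlgHom.comp_apply, polyAct_X, map_sum, map_smul, Finset.smul_sum, smul_smul]
  rw [Finset.sum_comm]
  refine Finset.sum_congr rfl fun k _ => ?_
  rw [← Finset.sum_smul, map_mul, Module.End.mul_apply]
  congr 1
  conv_lhs => rw [← Finset.univ_sum_single (ρ h (Pi.single k 1)), map_sum]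
  have hsingle (c : ι) (a : F) : Pi.single c a = a • Pi.single c (1 : F) := by
    rw [← Pi.single_smul', smul_eq_mul, mul_one]
  rw [Finset.sum_apply]
  refine Finset.sum_congr rfl fun c _ => ?_
  rw [hsingle c, map_smul, Pi.smul_apply, smul_eq_mul, mul_comm]

theorem isHomogeneous_polyAct (g : G) {d : ℕ} {f : MvPolynomial ι F} (hf : f.IsHomogeneous d) :
    (polyAct ρ g f).IsHomogeneous d := by
  have hX (i : ι) :
      (∑ j, ρ g (Pi.single j 1) i • X j : MvPolynomial ι F).IsHomogeneous 1 := by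
    rw [← mem_homogeneousSubmodule]
    exact Submodule.sum_mem _ fun j _ => Submodule.smul_mem _ _ (isHomogeneous_X F j)
  simpa [polyAct] using hf.aeval _ hX

theorem homogeneousComponent_mem_invRing {f : MvPolynomial ι F} (hf : f ∈ invRing ρ) (e : ℕ) :
    homogeneousComponent e f ∈ invRing ρ := by
  rw [mem_invRing] at hf ⊢
  intro g
  exact (homogeneousComponent_linearMap (polyAct ρ g).toLinearMap
    (fun _ _ hp => isHomogeneous_polyAct ρ g hp) e f).symm.trans (congrArg _ (hf g))

/-- `f ↦ f^g` is a right action, hence an action of the opposite group. -/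
noncomputable abbrev polyAction : MulSemiringAction Gᵐᵒᵖ (MvPolynomial ι F) where
  smul g f := polyAct ρ g.unop f
  one_smul f := DFunLike.congr_fun (polyAct_one ρ) f
  mul_smul g h f := DFunLike.congr_fun (polyAct_mul ρ h.unop g.unop) f
  smul_zero _ := map_zero _
  smul_add _ := map_add _
  smul_one _ := map_one _
  smul_mul _ := map_mul _

theorem isIntegral_invRing [Finite G] : Algebra.IsIntegral (invRing ρ) (MvPolynomial ι F) := by
  let := polyAction ρ
  have : Finite Gᵐᵒᵖ := .of_equiv G MulOpposite.opEquiv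
  have : Algebra.IsInvariant (invRing ρ) (MvPolynomial ι F) Gᵐᵒᵖ :=
    ⟨fun f hf => ⟨⟨f, (mem_invRing ρ).2 fun g => hf (MulOpposite.op g)⟩, rfl⟩⟩
  exact Algebra.IsInvariant.isIntegral _ _ Gᵐᵒᵖ

theorem finite_invRing [Finite G] : Module.Finite (invRing ρ) (MvPolynomial ι F) :=
  have := isIntegral_invRing ρ
  have : Algebra.FiniteType (invRing ρ) (MvPolynomial ι F) := .of_restrictScalars_finiteType F _ _
  Algebra.IsIntegral.finite

theorem fg_invRing [Finite G] : (invRing ρ).FG :=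
  Subalgebra.fg_top _ |>.1 <| fg_of_fg_of_fg F _ _ Algebra.FiniteType.out (finite_invRing ρ).fg_top
    Subtype.val_injective

theorem exists_fgOver_adjoinDegLE_invRing [Finite G] :
    ∃ d, fgOver (invRing ρ) (adjoinDegLE (invRing ρ) d) :=
  exists_fgOver_adjoinDegLE (fg_invRing ρ) fun _ hf => homogeneousComponent_mem_invRing ρ hf

theorem sigmaAlg_invRing_le_iff [Finite G] {d : ℕ} :
    sigmaAlg (invRing ρ) ≤ d ↔ fgOver (invRing ρ) (adjoinDegLE (invRing ρ) d) :=
  ⟨fun h => fgOver.mono (adjoinDegLE_mono _ h)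
      (Nat.sInf_mem (exists_fgOver_adjoinDegLE_invRing ρ)),
    fun h => Nat.sInf_le h⟩

open scoped Pointwise in
theorem exists_top_le_mul_span_of_fgOver [Finite G] {T : Subalgebra F (MvPolynomial ι F)}
    (h : fgOver (invRing ρ) T) : ∃ D : Finset (MvPolynomial ι F),
      ⊤ ≤ Subalgebra.toSubmodule T * Submodule.span F (D : Set (MvPolynomial ι F)) := by
  classical
  obtain ⟨B, -, hB⟩ := h
  obtain ⟨C, hC⟩ := (finite_invRing ρ).fg_top
  refine ⟨B * C, fun f _ => ?_⟩
  have hf := Subalgebra.mem_toSubmodule_mul_span_of_mem_span (hC ▸ Submodule.mem_top (x := f))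
  rw [Finset.coe_mul, ← Submodule.span_mul_span, ← mul_assoc]
  exact mul_le_mul' hB le_rfl hf

end Action

section Reynolds

variable {F : Type*} [Field F] {G : Type*} [Group G] [Fintype G] {ι : Type*} [Fintype ι]
  [DecidableEq ι] (ρ : Representation F G (ι → F))

noncomputable def reynolds : MvPolynomial ι F →ₗ[F] MvPolynomial ι F :=
  (Nat.card G : F)⁻¹ • ∑ g : G, (polyAct ρ g).toLinearMap

theorem reynolds_apply (f : MvPolynomial ι F) :
    reynolds ρ f = (Nat.card G : F)⁻¹ • ∑ g : G, polyAct ρ g f := by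
  simp [reynolds]

theorem reynolds_mem_invRing (f : MvPolynomial ι F) : reynolds ρ f ∈ invRing ρ := by
  refine (mem_invRing ρ).2 fun h => ?_
  simp only [reynolds_apply, map_smul, map_sum]
  congr 1
  refine Fintype.sum_equiv (Equiv.mulRight h) _ _ fun g => ?_
  simp [polyAct_mul]

theorem reynolds_eq_self (hG : (Nat.card G : F) ≠ 0) {f : MvPolynomial ι F}
    (hf : f ∈ invRing ρ) : reynolds ρ f = f := by
  rw [mem_invRing] at hf
  rw [reynolds_apply, Finset.sum_congr rfl fun g _ => hf g, Finset.sum_const, Finset.card_univ,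
    ← Nat.card_eq_fintype_card, ← Nat.cast_smul_eq_nsmul F, smul_smul, inv_mul_cancel₀ hG,
    one_smul]

theorem reynolds_mul {t : MvPolynomial ι F} (ht : t ∈ invRing ρ) (f : MvPolynomial ι F) :
    reynolds ρ (t * f) = t * reynolds ρ f := by
  rw [mem_invRing] at ht
  simp only [reynolds_apply, map_mul, ht, ← Finset.mul_sum, mul_smul_comm]

/-- The Reynolds operator is `F[V]^G`-linear and retracts `F[V]` onto `F[V]^G`, so it carries
module generators of `F[V]` over `T ≤ F[V]^G` to module generators of `F[V]^G`. -/
theorem fgOver_invRing_of_top_le (hG : (Nat.card G : F) ≠ 0)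
    {T : Subalgebra F (MvPolynomial ι F)} (hT : T ≤ invRing ρ) {D : Finset (MvPolynomial ι F)}
    (hD : ⊤ ≤ Subalgebra.toSubmodule T * Submodule.span F (D : Set (MvPolynomial ι F))) :
    fgOver (invRing ρ) T := by
  classical
  refine ⟨D.image (reynolds ρ), ?_, fun f hf => ?_⟩
  · rw [Finset.coe_image]
    exact Set.image_subset_iff.2 fun f _ => reynolds_mem_invRing ρ f
  have hle : Subalgebra.toSubmodule T * Submodule.span F (D : Set (MvPolynomial ι F)) ≤
      (Subalgebra.toSubmodule T * (Submodule.span F D).map (reynolds ρ)).comap (reynolds ρ) :=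
    Submodule.mul_le.2 fun t ht v hv => by
      rw [Submodule.mem_comap, reynolds_mul ρ (hT ht)]
      exact Submodule.mul_mem_mul ht (Submodule.mem_map_of_mem hv)
  rw [Finset.coe_image, ← Submodule.map_span, ← reynolds_eq_self ρ hG hf]
  exact hle (hD Submodule.mem_top)

end Reynolds

section DirectSum

variable {F : Type*} [Field F] {n : ℕ} {κ : Fin n → Type*}

/-- Pullback of polynomial functions along the projection `W → V_i`. -/
noncomputable def inclHom (i : Fin n) :
    MvPolynomial (κ i) F →ₐ[F] MvPolynomial (Σ i, κ i) F :=
  rename (Sigma.mk i)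

/-- Restriction of polynomial functions to the summand `V_i ⊆ W`. -/
noncomputable def projHom (i : Fin n) :
    MvPolynomial (Σ i, κ i) F →ₐ[F] MvPolynomial (κ i) F :=
  aeval fun x => if h : x.1 = i then X (h ▸ x.2) else 0

@[simp]
theorem inclHom_X (i : Fin n) (j : κ i) : inclHom (F := F) i (X j) = X ⟨i, j⟩ :=
  rename_X _ _

@[simp]
theorem projHom_inclHom (i : Fin n) (f : MvPolynomial (κ i) F) : projHom i (inclHom i f) = f := by
  have hcomp : (projHom i).comp (inclHom i) = AlgHom.id F (MvPolynomial (κ i) F) := by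
    ext
    simp [projHom]
  exact DFunLike.congr_fun hcomp f

theorem projHom_X_of_ne {i i' : Fin n} (h : i' ≠ i) (j : κ i') :
    projHom (F := F) i (X ⟨i', j⟩) = 0 := by
  simp [projHom, h]

theorem isHomogeneous_inclHom (i : Fin n) {d : ℕ} {f : MvPolynomial (κ i) F}
    (hf : f.IsHomogeneous d) : (inclHom i f).IsHomogeneous d :=
  hf.rename_isHomogeneous

theorem isHomogeneous_projHom (i : Fin n) {d : ℕ} {f : MvPolynomial (Σ i, κ i) F}
    (hf : f.IsHomogeneous d) : (projHom i f).IsHomogeneous d := by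
  have hX (x : Σ i, κ i) :
      (if h : x.1 = i then X (h ▸ x.2) else 0 : MvPolynomial (κ i) F).IsHomogeneous 1 := by
    split_ifs
    exacts [isHomogeneous_X _ _, isHomogeneous_zero _ _ _]
  simpa [projHom] using hf.aeval _ hX

theorem top_le_prod_range_inclHom :
    ⊤ ≤ ∏ i, Subalgebra.toSubmodule (inclHom (F := F) (κ := κ) i).range := by
  rw [← Subalgebra.toSubmodule_finset_sup, ← Algebra.top_toSubmodule,
    ← adjoin_range_X (σ := Σ i, κ i) (R := F)]
  refine Subalgebra.toSubmodule.monotone (Algebra.adjoin_le ?_)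
  rintro _ ⟨⟨i, j⟩, rfl⟩
  exact Finset.le_sup (f := fun i => (inclHom i).range) (Finset.mem_univ i) ⟨X j, inclHom_X i j⟩

variable {G : Type*} [Group G] [∀ i, DecidableEq (κ i)]
  (ρ : ∀ i, Representation F G (κ i → F))

theorem repSigma_single_self (g : G) (i : Fin n) (j j' : κ i) :
    repSigma ρ g (Pi.single ⟨i, j'⟩ 1) ⟨i, j⟩ = ρ i g (Pi.single j' 1) j := by
  have : (fun j₀ => (Pi.single ⟨i, j'⟩ 1 : (Σ i, κ i) → F) ⟨i, j₀⟩) =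
      Pi.single j' 1 := by
    ext j₀
    simp [Pi.single_apply]
  exact congrFun (congrArg (ρ i g) this) j

theorem repSigma_single_of_ne (g : G) {i i' : Fin n} (h : i' ≠ i) (j : κ i) (j' : κ i') :
    repSigma ρ g (Pi.single ⟨i', j'⟩ 1) ⟨i, j⟩ = 0 := by
  have : (fun j₀ => (Pi.single ⟨i', j'⟩ 1 : (Σ i, κ i) → F) ⟨i, j₀⟩) = 0 := by
    ext j₀
    simp [Ne.symm h]
  exact (congrFun (congrArg (ρ i g) this) j).trans (by simp)

variable [∀ i, Fintype (κ i)]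

theorem polyAct_repSigma_X (g : G) (i : Fin n) (j : κ i) :
    polyAct (repSigma ρ) g (X ⟨i, j⟩) = inclHom i (polyAct (ρ i) g (X j)) := by
  rw [polyAct_X, polyAct_X, map_sum, ← Finset.univ_sigma_univ, Finset.sum_sigma,
    Finset.sum_eq_single_of_mem i (Finset.mem_univ _) fun i' _ h => ?_]
  · simp [repSigma_single_self, inclHom]
  · simp [repSigma_single_of_ne ρ g h]

theorem polyAct_repSigma_comp_inclHom (g : G) (i : Fin n) :
    (polyAct (repSigma ρ) g).comp (inclHom i) = (inclHom i).comp (polyAct (ρ i) g) := by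
  ext j : 1
  simp [inclHom, polyAct_repSigma_X]

theorem projHom_comp_polyAct_repSigma (g : G) (i : Fin n) :
    (projHom i).comp (polyAct (repSigma ρ) g) = (polyAct (ρ i) g).comp (projHom i) := by
  ext ⟨i', j⟩ : 1
  rw [AlgHom.comp_apply, AlgHom.comp_apply, polyAct_repSigma_X, ← inclHom_X]
  by_cases h : i' = i
  · subst h
    rw [projHom_inclHom, projHom_inclHom]
  · simp [polyAct_X, projHom_X_of_ne h]

theorem inclHom_mem_invRing {i : Fin n} {f : MvPolynomial (κ i) F} (hf : f ∈ invRing (ρ i)) :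
    inclHom i f ∈ invRing (repSigma ρ) :=
  (mem_invRing _).2 fun g => by
    rw [← AlgHom.comp_apply, polyAct_repSigma_comp_inclHom, AlgHom.comp_apply,
      (mem_invRing _).1 hf g]

theorem projHom_mem_invRing {i : Fin n} {f : MvPolynomial (Σ i, κ i) F}
    (hf : f ∈ invRing (repSigma ρ)) : projHom i f ∈ invRing (ρ i) :=
  (mem_invRing _).2 fun g => by
    rw [← AlgHom.comp_apply, ← projHom_comp_polyAct_repSigma, AlgHom.comp_apply,
      (mem_invRing _).1 hf g]

theorem map_projHom_invRing (i : Fin n) :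
    (invRing (repSigma ρ)).map (projHom i) = invRing (ρ i) :=
  le_antisymm (Subalgebra.map_le.2 fun _ hf => projHom_mem_invRing ρ hf) fun f hf =>
    ⟨inclHom i f, inclHom_mem_invRing ρ hf, projHom_inclHom i f⟩

theorem fgOver_adjoinDegLE_of_repSigma {d : ℕ}
    (h : fgOver (invRing (repSigma ρ)) (adjoinDegLE (invRing (repSigma ρ)) d)) (i : Fin n) :
    fgOver (invRing (ρ i)) (adjoinDegLE (invRing (ρ i)) d) :=
  h.of_map (projHom i) (map_projHom_invRing ρ i) fun _ _ hp => isHomogeneous_projHom i hp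

open scoped Pointwise in
theorem fgOver_adjoinDegLE_repSigma [Finite G] (hG : (Nat.card G : F) ≠ 0) {d : ℕ}
    (h : ∀ i, fgOver (invRing (ρ i)) (adjoinDegLE (invRing (ρ i)) d)) :
    fgOver (invRing (repSigma ρ)) (adjoinDegLE (invRing (repSigma ρ)) d) := by
  classical
  have := Fintype.ofFinite G
  set T := adjoinDegLE (invRing (repSigma ρ)) d
  choose D hD using fun i => exists_top_le_mul_span_of_fgOver (ρ i) (h i)
  have hblock (i : Fin n) : Subalgebra.toSubmodule (inclHom i).range ≤
      Subalgebra.toSubmodule T * Submodule.span F ((D i).image (inclHom i) : Set _) := by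
    have hincl : (adjoinDegLE (invRing (ρ i)) d).map (inclHom i) ≤ T :=
      map_adjoinDegLE_le (inclHom i) (S' := invRing (repSigma ρ))
        (Subalgebra.map_le.2 fun _ hf => inclHom_mem_invRing ρ hf)
        (fun _ _ hp => isHomogeneous_inclHom i hp) d
    rw [← Algebra.map_top, Subalgebra.map_toSubmodule, Algebra.top_toSubmodule]
    refine (Submodule.map_mono (hD i)).trans ?_
    rw [Submodule.map_mul, Submodule.map_span, ← Subalgebra.map_toSubmodule, Finset.coe_image]
    exact mul_le_mul' (Subalgebra.toSubmodule.monotone hincl) le_rfl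
  refine fgOver_invRing_of_top_le (repSigma ρ) hG (adjoinDegLE_le _ d)
    (D := ∏ i, (D i).image (inclHom i)) ?_
  rw [Finset.coe_prod, ← Submodule.prod_span]
  exact top_le_prod_range_inclHom.trans
    (Subalgebra.prod_le_toSubmodule_mul_prod _ T fun i _ => hblock i)

end DirectSum

/-- For `G`-modules `V_1, …, V_n` and `W = V_1 ⊕ ⋯ ⊕ V_n`,
`σ(G, W) = max_i σ(G, V_i)`. -/
theorem sigmaAlg_repSigma {F : Type*} [Field F] {G : Type*} [Group G] [Finite G]
    (hG : (Nat.card G : F) ≠ 0) (n : ℕ) (κ : Fin n → ℕ)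
    (ρ : ∀ i, Representation F G (Fin (κ i) → F)) :
    sigmaAlg (invRing (repSigma ρ)) = Finset.univ.sup (fun i => sigmaAlg (invRing (ρ i))) := by
  apply le_antisymm
  · rw [sigmaAlg_invRing_le_iff]
    exact fgOver_adjoinDegLE_repSigma ρ hG fun i => (sigmaAlg_invRing_le_iff (ρ i)).1 <|
      Finset.le_sup (f := fun i => sigmaAlg (invRing (ρ i))) (Finset.mem_univ i)
  · exact Finset.sup_le fun i _ => (sigmaAlg_invRing_le_iff (ρ i)).2 <|
      fgOver_adjoinDegLE_of_repSigma ρ ((sigmaAlg_invRing_le_iff _).1 le_rfl) i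
end
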